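/- arXiv:math/0406500 — 2 statements merged into one kernel-verified Lean document; each statement's English description precedes it below -/
import Mathlib

section
/- Let g ∈ ℂ[x_1,…,x_{n−1},z], k ≥ 1, 0 ≤ i ≤ k−1, and let δ : ℂ[x_1,…,x_{n−1},z_1,…,z_k] → ℂ[x_1,…,x_{n−1},z] be the ℂ-algebra homomorphism fixing each x_m and sending every z_a to z (the full diagonal substitution). Then δ(V_i^k(g)) = ∑_{s=i}^{k−1} (−1)^{s−i} · binom(s,i) · z^{s−i} · (1/s!) · ∂^s g/∂z^s in ℂ[x_1,…,x_{n−1},z]; that is, on the full diagonal the interpolation coefficients V_i^k(g) specialize to the coefficients of the (k−1)-st order Taylor polynomial of g at z. -/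
open MvPolynomial

namespace Stmt7

open Finset Matrix

variable {k : ℕ}

noncomputable def VtA (k : ℕ) : MvPolynomial (Fin k) ℂ :=
  ∏ p ∈ Finset.univ.filter (fun p : Fin k × Fin k => p.1 < p.2), (X p.2 - X p.1)

def Nk (k : ℕ) : ℕ := (Finset.univ.filter (fun p : Fin k × Fin k => p.1 < p.2)).card

lemma prod_pairs {M : Type*} [CommMonoid M] (f : Fin k → Fin k → M) :
    ∏ a : Fin k, ∏ b ∈ Finset.Ioi a, f a b
      = ∏ p ∈ Finset.univ.filter (fun p : Fin k × Fin k => p.1 < p.2), f p.1 p.2 := by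
  rw [Finset.prod_filter, Fintype.prod_prod_type]
  refine Finset.prod_congr rfl fun a _ => ?_
  rw [← Finset.prod_filter]
  congr 1
  ext b
  simp

lemma Nk_eq : Nk k = ∑ j ∈ Finset.range k, j := by
  classical
  have h1 : Nk k = ∑ a : Fin k, (Finset.Ioi a).card := by
    rw [Nk, Finset.card_filter, Fintype.sum_prod_type]
    refine Finset.sum_congr rfl fun a _ => ?_
    rw [← Finset.card_filter]
    congr 1
    ext b
    simp
  rw [h1]
  have h2 : ∀ a : Fin k, (Finset.Ioi a).card = k - 1 - (a : ℕ) := fun a => Fin.card_Ioi a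
  calc ∑ a : Fin k, (Finset.Ioi a).card = ∑ a : Fin k, (k - 1 - (a : ℕ)) := by
        exact Finset.sum_congr rfl fun a _ => h2 a
    _ = ∑ j ∈ Finset.range k, (k - 1 - j) := Fin.sum_univ_eq_sum_range _ k
    _ = ∑ j ∈ Finset.range k, j := Finset.sum_range_reflect id k
  
lemma vtA_mem : VtA k ∈ homogeneousSubmodule (Fin k) ℂ (Nk k) := by
  have h : ∀ p ∈ Finset.univ.filter (fun p : Fin k × Fin k => p.1 < p.2),
      ((X p.2 - X p.1 : MvPolynomial (Fin k) ℂ)).IsHomogeneous 1 := by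
    intro p _
    rw [← mem_homogeneousSubmodule]
    exact Submodule.sub_mem _ (isHomogeneous_X ℂ p.2) (isHomogeneous_X ℂ p.1)
  have := MvPolynomial.IsHomogeneous.prod _ _ (fun _ => 1) h
  rw [mem_homogeneousSubmodule, Nk]
  simpa [VtA] using this

lemma vtA_ne_zero : VtA k ≠ 0 := by
  rw [VtA]
  refine Finset.prod_ne_zero_iff.2 fun p hp => ?_
  have hne : p.1 ≠ p.2 := (Finset.mem_filter.1 hp).2.ne
  exact sub_ne_zero.2 fun h => hne ((X_injective h).symm)

lemma detB_eq (ζ : ℂ) :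
    (Matrix.vandermonde (fun a : Fin k => (C ζ + X a : MvPolynomial (Fin k) ℂ))).det = VtA k := by
  rw [Matrix.det_vandermonde, VtA,
    ← prod_pairs (fun a b => (X b - X a : MvPolynomial (Fin k) ℂ))]
  exact Finset.prod_congr rfl fun a _ => Finset.prod_congr rfl fun b _ => by ring

lemma hc_mul_vt (q : MvPolynomial (Fin k) ℂ) :
    homogeneousComponent (Nk k) (q * VtA k) = C (constantCoeff q) * VtA k := by
  have vtish : (VtA k : MvPolynomial (Fin k) ℂ).IsHomogeneous (Nk k) :=
    (mem_homogeneousSubmodule _ _).1 vtA_mem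
  conv_lhs => rw [← sum_homogeneousComponent q, Finset.sum_mul, map_sum]
  rw [Finset.sum_eq_single 0]
  · rw [homogeneousComponent_zero, homogeneousComponent_C_mul,
      homogeneousComponent_of_mem vtA_mem, if_pos rfl]
    congr 1
  · intro j _ hj0
    have hmem : ((homogeneousComponent j) q * VtA k).IsHomogeneous (j + Nk k) :=
      (homogeneousComponent_isHomogeneous j q).mul vtish
    rw [homogeneousComponent_of_mem ((mem_homogeneousSubmodule _ _).2 hmem),
      if_neg (fun hc => hj0 (by omega))]
  · intro h
    exact absurd (Finset.mem_range.2 (Nat.succ_pos _)) h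


lemma range_card_sum_le (T : Finset ℕ) : ∑ j ∈ Finset.range T.card, j ≤ ∑ t ∈ T, t := by
  induction T using Finset.strongInduction with
  | _ T ih =>
    rcases T.eq_empty_or_nonempty with rfl | hT
    · simp
    · have hmax := T.max'_mem hT
      have hT1 : 1 ≤ T.card := Finset.card_pos.2 hT
      have hcard : T.card - 1 ≤ T.max' hT := by
        have hsub : T ⊆ Finset.range (T.max' hT + 1) := fun x hx =>
          Finset.mem_range.2 (Nat.lt_succ_of_le (Finset.le_max' T x hx))
        have := Finset.card_le_card hsub
        rw [Finset.card_range] at this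
        omega
      have herase := ih (T.erase (T.max' hT)) (Finset.erase_ssubset hmax)
      have hcard2 : (T.erase (T.max' hT)).card = T.card - 1 := Finset.card_erase_of_mem hmax
      rw [hcard2] at herase
      have hsum : ∑ t ∈ T, t = T.max' hT + ∑ t ∈ T.erase (T.max' hT), t :=
        (Finset.add_sum_erase _ _ hmax).symm
      obtain ⟨m, hm⟩ : ∃ m, T.card = m + 1 := ⟨T.card - 1, by omega⟩
      rw [hsum, hm, Finset.sum_range_succ]
      have hm' : m = T.card - 1 := by omega
      have h1 : ∑ j ∈ Finset.range m, j ≤ ∑ t ∈ T.erase (T.max' hT), t := by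
        rw [hm'] ; exact herase
      omega

lemma powmat_mem (e : Fin k → ℕ) :
    (Matrix.of fun b a : Fin k => (X a : MvPolynomial (Fin k) ℂ) ^ e b).det
      ∈ homogeneousSubmodule (Fin k) ℂ (∑ b, e b) := by
  rw [Matrix.det_apply]
  refine Submodule.sum_mem _ fun σ _ => ?_
  have hm : (∏ i, (X i : MvPolynomial (Fin k) ℂ) ^ e (σ i))
      ∈ homogeneousSubmodule (Fin k) ℂ (∑ b, e b) := by
    rw [mem_homogeneousSubmodule, ← Equiv.sum_comp σ e]
    exact MvPolynomial.IsHomogeneous.prod Finset.univ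
      (fun i => (X i : MvPolynomial (Fin k) ℂ) ^ e (σ i)) (fun i => e (σ i))
      (fun i _ => by simpa using (isHomogeneous_X ℂ i).pow (e (σ i)))
  have hterm : (∏ i, (Matrix.of fun b a : Fin k => (X a : MvPolynomial (Fin k) ℂ) ^ e b) (σ i) i)
      = ∏ i, (X i : MvPolynomial (Fin k) ℂ) ^ e (σ i) := rfl
  rw [hterm]
  rcases Int.units_eq_one_or (Equiv.Perm.sign σ) with h | h <;> rw [h]
  · simpa using hm
  · simpa using Submodule.neg_mem _ hm

lemma hcN_powmat (e : Fin k → ℕ) (he : ∑ b, e b ≠ Nk k) :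
    homogeneousComponent (Nk k)
      (Matrix.of fun b a : Fin k => (X a : MvPolynomial (Fin k) ℂ) ^ e b).det = 0 := by
  rw [homogeneousComponent_of_mem (powmat_mem e), if_neg (Ne.symm he)]

lemma det_updateCol_finsum {R : Type*} [CommRing R] (M : Matrix (Fin k) (Fin k) R) (j : Fin k)
    (s : Finset ℕ) (u : ℕ → Fin k → R) :
    (M.updateCol j fun a => ∑ x ∈ s, u x a).det = ∑ x ∈ s, (M.updateCol j (u x)).det := by
  classical
  induction s using Finset.induction with
  | empty =>
    simp only [Finset.sum_empty]
    exact Matrix.det_eq_zero_of_column_eq_zero j (fun a => by simp [Matrix.updateCol_apply])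
  | insert x s hx ih =>
    simp only [Finset.sum_insert hx]
    rw [← ih]
    have hfun : (fun a => u x a + ∑ y ∈ s, u y a) = (u x + fun a => ∑ y ∈ s, u y a) := rfl
    rw [hfun, Matrix.det_updateCol_add]


lemma detD_lt (ζ : ℂ) (i : Fin k) (s : ℕ) (hs : s < k) :
    ((Matrix.vandermonde fun a : Fin k => (C ζ + X a : MvPolynomial (Fin k) ℂ)).updateCol i
        (fun a => (X a) ^ s)).det
      = C (if (i:ℕ) ≤ s then ((-1:ℂ)^(s - (i:ℕ)) * (s.choose (i:ℕ)) * ζ^(s - (i:ℕ))) else 0)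
          * VtA k := by
  classical
  set B := Matrix.vandermonde fun a : Fin k => (C ζ + X a : MvPolynomial (Fin k) ℂ) with hB
  set coef : ℕ → ℂ := fun c => (-1:ℂ)^(c+s) * ζ^(s-c) * (s.choose c) with hcoef
  set w : ℕ → Fin k → MvPolynomial (Fin k) ℂ := fun c a => (C ζ + X a)^c with hw
  have hcol : (fun a : Fin k => (X a : MvPolynomial (Fin k) ℂ) ^ s)
      = fun a => ∑ c ∈ Finset.range (s+1), C (coef c) * w c a := by
    funext a
    have hx : (X a : MvPolynomial (Fin k) ℂ) = (C ζ + X a) - C ζ := by ring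
    conv_lhs => rw [hx]
    rw [sub_pow]
    refine Finset.sum_congr rfl fun c _ => ?_
    have hC : ((s.choose c : ℕ) : MvPolynomial (Fin k) ℂ) = C ((s.choose c : ℕ) : ℂ) := by
      simp
    rw [hC, hcoef, hw]
    simp only [_root_.map_mul, map_pow, map_neg, _root_.map_one]
    ring
  rw [hcol, det_updateCol_finsum]
  have hsmul : ∀ c : ℕ, (fun a => C (coef c) * w c a) = ((C (coef c) : MvPolynomial (Fin k) ℂ) • w c) := by
    intro c; funext a; simp [Pi.smul_apply, smul_eq_mul]
  have hone : ∀ c : ℕ, (B.updateCol i (fun a => C (coef c) * w c a)).det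
      = C (coef c) * (B.updateCol i (w c)).det := by
    intro c
    rw [hsmul c, Matrix.det_updateCol_smul]
  have hzero : ∀ c ∈ Finset.range (s+1), c ≠ (i:ℕ) →
      (B.updateCol i (fun a => C (coef c) * w c a)).det = 0 := by
    intro c hc hci
    rw [hone c]
    have hck : c < k := lt_of_lt_of_le (Finset.mem_range.1 hc) hs
    have hfin : i ≠ (⟨c, hck⟩ : Fin k) := by
      intro h
      exact hci (by rw [h])
    rw [Matrix.det_zero_of_column_eq hfin ?_, mul_zero]
    intro a
    rw [Matrix.updateCol_apply, Matrix.updateCol_apply, if_pos rfl,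
      if_neg (Ne.symm hfin)]
    rfl
  have hBB : B.updateCol i (w (i:ℕ)) = B := by
    have : w (i:ℕ) = fun a => B a i := rfl
    rw [this, Matrix.updateCol_eq_self]
  by_cases hi : (i:ℕ) ≤ s
  · rw [Finset.sum_eq_single_of_mem (i:ℕ) (Finset.mem_range.2 (by omega)) hzero]
    rw [hone, hBB, detB_eq, if_pos hi]
    congr 2
    show (-1:ℂ)^((i:ℕ)+s) * ζ^(s-(i:ℕ)) * (s.choose (i:ℕ)) = _
    have hpar : (-1:ℂ)^((i:ℕ)+s) = (-1:ℂ)^(s-(i:ℕ)) := by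
      rw [show (i:ℕ)+s = (s-(i:ℕ))+2*(i:ℕ) by omega, pow_add, pow_mul]
      simp
    rw [hpar]
    ring
  · rw [Finset.sum_eq_zero, if_neg hi, map_zero, zero_mul]
    intro c hc
    have hcs : c ≤ s := Nat.lt_succ_iff.1 (Finset.mem_range.1 hc)
    exact hzero c hc (fun h => hi (by omega))

lemma detD_ge (ζ : ℂ) (i : Fin k) (s : ℕ) (hs : k ≤ s) :
    homogeneousComponent (Nk k)
      ((Matrix.vandermonde fun a : Fin k => (C ζ + X a : MvPolynomial (Fin k) ℂ)).updateCol i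
        (fun a => (X a) ^ s)).det = 0 := by
  classical
  have hk : 0 < k := i.pos
  set B := Matrix.vandermonde fun a : Fin k => (C ζ + X a : MvPolynomial (Fin k) ℂ) with hB
  set w : ℕ → Fin k → MvPolynomial (Fin k) ℂ := fun c a => X a ^ c with hw
  set h : Fin k → ℕ → ℂ := fun b c =>
    if b = i then (if c = s then 1 else 0) else (ζ^((b:ℕ)-c) * ((b:ℕ).choose c)) with hh
  -- transpose and decompose rows
  have hdet : (B.updateCol i (fun a => (X a) ^ s)).det
      = Matrix.detRowAlternating.toMultilinearMap
          (fun b : Fin k => ∑ c ∈ Finset.range (s+1),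
            (C (h b c) : MvPolynomial (Fin k) ℂ) • w c) := by
    rw [← Matrix.det_transpose]
    have : (B.updateCol i (fun a => (X a) ^ s)).transpose
        = Matrix.of (fun b : Fin k => ∑ c ∈ Finset.range (s+1),
            (C (h b c) : MvPolynomial (Fin k) ℂ) • w c) := by
      funext b a
      simp only [Matrix.transpose_apply, Matrix.updateCol_apply, Matrix.of_apply]
      by_cases hbi : b = i
      · rw [if_pos hbi, hh]
        simp only [Finset.sum_apply, Pi.smul_apply, smul_eq_mul, hw, hbi, if_pos]
        rw [Finset.sum_eq_single s]
        · simp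
        · intro c _ hcs; simp [hcs]
        · intro hsr; exact absurd (Finset.mem_range.2 (by omega)) hsr
      · rw [if_neg hbi, hB]
        simp only [Matrix.vandermonde_apply, Finset.sum_apply, Pi.smul_apply, smul_eq_mul, hw, hh,
          if_neg hbi]
        have hbk : (b:ℕ) < k := b.isLt
        rw [show (C ζ + X a : MvPolynomial (Fin k) ℂ) = X a + C ζ from add_comm _ _, add_pow]
        rw [Finset.sum_subset (Finset.range_subset_range.2 (show (b:ℕ)+1 ≤ s+1 by omega))
          (fun c _ hc => by
            have hbc : (b:ℕ) < c := by
              have : ¬ c < (b:ℕ)+1 := fun hlt => hc (Finset.mem_range.2 hlt)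
              omega
            have hch : (b:ℕ).choose c = 0 := Nat.choose_eq_zero_of_lt hbc
            simp [hch])]
        refine Finset.sum_congr rfl fun c _ => ?_
        have hcast : (((b:ℕ).choose c : ℕ) : MvPolynomial (Fin k) ℂ)
            = C (((b:ℕ).choose c : ℕ) : ℂ) := by simp
        rw [hcast]
        simp only [_root_.map_mul, map_pow]
        ring
    rw [this]
    rfl
  rw [hdet]
  rw [(Matrix.detRowAlternating).toMultilinearMap.map_sum_finset
      (fun b c => (C (h b c) : MvPolynomial (Fin k) ℂ) • w c)
      (fun _ => Finset.range (s+1))]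
  rw [map_sum]
  refine Finset.sum_eq_zero fun r hr => ?_
  have hterm : Matrix.detRowAlternating.toMultilinearMap
      (fun b => (C (h b (r b)) : MvPolynomial (Fin k) ℂ) • w (r b))
      = C (∏ b, h b (r b)) * (Matrix.of fun b a : Fin k => (X a : MvPolynomial (Fin k) ℂ) ^ r b).det := by
    rw [(Matrix.detRowAlternating).toMultilinearMap.map_smul_univ
      (fun b => (C (h b (r b)) : MvPolynomial (Fin k) ℂ)) (fun b => w (r b))]
    rw [smul_eq_mul, map_prod]
    rfl
  rw [hterm, homogeneousComponent_C_mul]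
  by_cases hinj : Function.Injective r
  · by_cases hri : r i = s
    · rw [hcN_powmat r ?_, mul_zero]
      -- sum of r over all b is ≠ Nk
      set T := Finset.univ.image r with hT
      have hTcard : T.card = k := by
        rw [hT, Finset.card_image_of_injective _ hinj, Finset.card_univ, Fintype.card_fin]
      have hsum : ∑ b, r b = ∑ t ∈ T, t := by
        rw [hT, Finset.sum_image (fun x _ y _ hxy => hinj hxy)]
      have hsT : s ∈ T := by
        rw [hT]; exact Finset.mem_image.2 ⟨i, Finset.mem_univ i, hri⟩
      have h1 : ∑ t ∈ T, t = s + ∑ t ∈ T.erase s, t := (Finset.add_sum_erase _ id hsT).symm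
      have h2 : ∑ j ∈ Finset.range (T.erase s).card, j ≤ ∑ t ∈ T.erase s, t :=
        range_card_sum_le _
      have h3 : (T.erase s).card = k - 1 := by rw [Finset.card_erase_of_mem hsT, hTcard]
      have h4 : Nk k = (∑ j ∈ Finset.range (k-1), j) + (k-1) := by
        rw [Nk_eq]
        conv_lhs => rw [show k = (k-1)+1 by omega]
        rw [Finset.sum_range_succ]
      rw [h3] at h2
      rw [hsum, h1]
      omega
    · have : h i (r i) = 0 := by rw [hh]; simp [hri]
      rw [Finset.prod_eq_zero (Finset.mem_univ i) this, map_zero, zero_mul]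
  · rw [Function.not_injective_iff] at hinj
    obtain ⟨b, b', hbb, hne⟩ := hinj
    rw [Matrix.det_zero_of_row_eq hne (by funext a; simp [Matrix.of_apply, hbb]), map_zero,
      mul_zero]

lemma core (ζ : ℂ) (i : Fin k) (p : Polynomial ℂ) :
    homogeneousComponent (Nk k)
      ((Matrix.vandermonde fun a : Fin k => (C ζ + X a : MvPolynomial (Fin k) ℂ)).updateCol i
        (fun a => Polynomial.aeval (C ζ + X a : MvPolynomial (Fin k) ℂ) p)).det
    = C (∑ s ∈ Finset.Icc (i:ℕ) (k-1),
          (-1:ℂ)^(s-(i:ℕ)) * (s.choose (i:ℕ)) * ((s.factorial : ℂ))⁻¹ * ζ^(s-(i:ℕ))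
            * Polynomial.eval ζ ((⇑Polynomial.derivative)^[s] p)) * VtA k := by
  classical
  have hk : 0 < k := i.pos
  set B := Matrix.vandermonde fun a : Fin k => (C ζ + X a : MvPolynomial (Fin k) ℂ) with hB
  set q := Polynomial.taylor ζ p with hq
  set w : ℕ → Fin k → MvPolynomial (Fin k) ℂ := fun c a => X a ^ c with hw
  -- rewrite the column via Taylor expansion
  have hcol : (fun a : Fin k => Polynomial.aeval (C ζ + X a : MvPolynomial (Fin k) ℂ) p)
      = fun a => ∑ c ∈ Finset.range (q.natDegree + 1), C (q.coeff c) * w c a := by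
    funext a
    have h1 : Polynomial.aeval (C ζ + X a : MvPolynomial (Fin k) ℂ) p
        = Polynomial.aeval (X a : MvPolynomial (Fin k) ℂ) q := by
      rw [hq, Polynomial.taylor_apply, Polynomial.aeval_comp]
      simp [add_comm]
    rw [h1, Polynomial.aeval_eq_sum_range]
    refine Finset.sum_congr rfl fun c _ => ?_
    rw [MvPolynomial.smul_eq_C_mul]
  rw [hcol, det_updateCol_finsum, map_sum]
  have hsmul : ∀ c : ℕ, (fun a => C (q.coeff c) * w c a)
      = ((C (q.coeff c) : MvPolynomial (Fin k) ℂ) • w c) := by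
    intro c; funext a; simp [Pi.smul_apply, smul_eq_mul]
  -- per-term evaluation
  have hterm : ∀ c ∈ Finset.range (q.natDegree + 1),
      homogeneousComponent (Nk k)
        (B.updateCol i (fun a => C (q.coeff c) * w c a)).det
      = if (i:ℕ) ≤ c ∧ c < k then
          C (q.coeff c * ((-1:ℂ)^(c-(i:ℕ)) * (c.choose (i:ℕ)) * ζ^(c-(i:ℕ)))) * VtA k
        else 0 := by
    intro c _
    rw [hsmul c, Matrix.det_updateCol_smul, homogeneousComponent_C_mul]
    by_cases hck : c < k
    · rw [detD_lt ζ i c hck, homogeneousComponent_C_mul,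
        homogeneousComponent_of_mem vtA_mem, if_pos rfl]
      by_cases hic : (i:ℕ) ≤ c
      · rw [if_pos hic, if_pos ⟨hic, hck⟩, ← mul_assoc, ← _root_.map_mul]
      · rw [if_neg hic, if_neg (fun hh => hic hh.1), map_zero, zero_mul, mul_zero]
    · rw [detD_ge ζ i c (by omega), mul_zero, if_neg (fun hh => hck hh.2)]
  rw [Finset.sum_congr rfl hterm]
  -- reindex the sum
  rw [← Finset.sum_filter]
  have hset : (Finset.range (q.natDegree + 1)).filter (fun c => (i:ℕ) ≤ c ∧ c < k)
      = (Finset.Icc (i:ℕ) (k-1)).filter (fun c => c < q.natDegree + 1) := by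
    ext c
    simp only [Finset.mem_filter, Finset.mem_range, Finset.mem_Icc]
    omega
  rw [hset, Finset.sum_filter]
  rw [_root_.map_sum, Finset.sum_mul]
  refine Finset.sum_congr rfl fun s hsmem => ?_
  have key : Polynomial.eval ζ ((⇑Polynomial.derivative)^[s] p)
      = (s.factorial : ℂ) * q.coeff s := by
    have h2 : (⇑Polynomial.derivative)^[s] p = s.factorial • (Polynomial.hasseDeriv s p) := by
      rw [← Polynomial.factorial_smul_hasseDeriv]
      rfl
    rw [h2, hq, Polynomial.taylor_coeff, nsmul_eq_mul, Polynomial.eval_mul]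
    simp
  by_cases hdeg : s < q.natDegree + 1
  · rw [if_pos hdeg]
    congr 2
    rw [key]
    have hfac : (s.factorial : ℂ) ≠ 0 := Nat.cast_ne_zero.2 s.factorial_ne_zero
    field_simp
  · rw [if_neg hdeg]
    have hnd : (Polynomial.taylor ζ p).natDegree = p.natDegree := Polynomial.natDegree_taylor p ζ
    have hz : (⇑Polynomial.derivative)^[s] p = 0 := Polynomial.iterate_derivative_eq_zero (by
      simp only [hq] at hdeg
      omega)
    rw [hz]
    simp

section Transfer

variable {σ : Type*}

/-- Specialization of the `x`-variables to constants, `z ↦ X`. -/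
noncomputable def Tv (f : σ → ℂ) : MvPolynomial (σ ⊕ Unit) ℂ →ₐ[ℂ] Polynomial ℂ :=
  aeval (Sum.elim (fun m => Polynomial.C (f m)) fun _ : Unit => Polynomial.X)

lemma Tv_pderiv (f : σ → ℂ) (g : MvPolynomial (σ ⊕ Unit) ℂ) :
    Tv f (pderiv (Sum.inr ()) g) = Polynomial.derivative (Tv f g) := by
  classical
  induction g using MvPolynomial.induction_on with
  | C c => simp [Tv, pderiv_C]
  | add p q ihp ihq => simp [map_add, ihp, ihq]
  | mul_X p j ih =>
    rw [pderiv_mul, map_add, _root_.map_mul, _root_.map_mul, ih, _root_.map_mul,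
      Polynomial.derivative_mul]
    cases j with
    | inl m =>
      rw [pderiv_X_of_ne (by simp)]
      simp [Tv]
    | inr u =>
      cases u
      rw [pderiv_X_self]
      simp [Tv]

lemma Tv_pderiv_iterate (f : σ → ℂ) (g : MvPolynomial (σ ⊕ Unit) ℂ) (s : ℕ) :
    Tv f ((⇑(pderiv (Sum.inr () : σ ⊕ Unit)))^[s] g)
      = (⇑Polynomial.derivative)^[s] (Tv f g) := by
  induction s generalizing g with
  | zero => rfl
  | succ m ih =>
    rw [Function.iterate_succ_apply, Function.iterate_succ_apply, ih, Tv_pderiv]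

lemma Tv_eval (v : σ ⊕ Unit → ℂ) (g : MvPolynomial (σ ⊕ Unit) ℂ) :
    eval v g = Polynomial.eval (v (Sum.inr ())) (Tv (fun m => v (Sum.inl m)) g) := by
  classical
  induction g using MvPolynomial.induction_on with
  | C c => simp [Tv]
  | add p q ihp ihq => simp [map_add, ihp, ihq]
  | mul_X p j ih =>
    rw [_root_.map_mul, _root_.map_mul, Polynomial.eval_mul, ← ih]
    cases j with
    | inl m => simp [Tv]
    | inr u => cases u; simp [Tv]

end Transfer

end Stmt7

/-- The `k×k` matrix whose `(a,b)` entry is `z_a^b` for `b ≠ i` and is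
`g(x₁,…,x_{n−1},z_a)` for `b = i`. -/
noncomputable def Mmat {n k : ℕ} (g : MvPolynomial (Fin (n - 1) ⊕ Unit) ℂ) (i : Fin k) :
    Matrix (Fin k) (Fin k) (MvPolynomial (Fin (n - 1) ⊕ Fin k) ℂ) :=
  fun a b =>
    if b = i then rename (Sum.map id fun _ => a) g
    else (X (Sum.inr a) : MvPolynomial (Fin (n - 1) ⊕ Fin k) ℂ) ^ (b : ℕ)

/-- The Vandermonde determinant `∏_{a<b} (z_b − z_a)`. -/
noncomputable def Vdm (n k : ℕ) : MvPolynomial (Fin (n - 1) ⊕ Fin k) ℂ :=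
  ∏ p ∈ Finset.univ.filter (fun p : Fin k × Fin k => p.1 < p.2),
    (X (Sum.inr p.2) - X (Sum.inr p.1))

/-- on the full diagonal, the interpolation coefficients `Vᵢᵏ(g)`
specialize to the coefficients of the `(k−1)`-st Taylor polynomial of `g` at `z`. -/
theorem stmt7 (n k : ℕ) (hk : 1 ≤ k) (i : Fin k)
    (g : MvPolynomial (Fin (n - 1) ⊕ Unit) ℂ)
    (V : MvPolynomial (Fin (n - 1) ⊕ Fin k) ℂ)
    (hV : (Mmat g i).det = V * Vdm n k) :
    rename (Sum.map id fun _ : Fin k => ()) V =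
      ∑ s ∈ Finset.Icc (i : ℕ) (k - 1),
        C ((-1 : ℂ) ^ (s - (i : ℕ)) * (s.choose (i : ℕ)) * ((Nat.factorial s : ℂ))⁻¹) *
          (X (Sum.inr ()) : MvPolynomial (Fin (n - 1) ⊕ Unit) ℂ) ^ (s - (i : ℕ)) *
          (⇑(pderiv (Sum.inr () : Fin (n - 1) ⊕ Unit)))^[s] g := by
  classical
  apply MvPolynomial.funext
  intro v
  set ζ := v (Sum.inr ()) with hζ
  set f : Fin (n-1) → ℂ := fun m => v (Sum.inl m) with hf
  set p := Stmt7.Tv f g with hp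
  set Φ : MvPolynomial (Fin (n - 1) ⊕ Fin k) ℂ →ₐ[ℂ] MvPolynomial (Fin k) ℂ :=
    aeval (Sum.elim (fun m => C (f m)) fun a : Fin k => C ζ + X a) with hΦ
  set bigsum : ℂ := ∑ s ∈ Finset.Icc (i:ℕ) (k-1),
      (-1:ℂ)^(s-(i:ℕ)) * (s.choose (i:ℕ)) * ((s.factorial : ℂ))⁻¹ * ζ^(s-(i:ℕ))
        * Polynomial.eval ζ ((⇑Polynomial.derivative)^[s] p) with hbigsum
  have h1 : Φ ((Mmat g i).det) = Φ V * Stmt7.VtA k := by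
    rw [hV, _root_.map_mul]
    congr 1
    rw [Vdm, Stmt7.VtA, map_prod]
    refine Finset.prod_congr rfl fun q hq => ?_
    rw [map_sub, hΦ, aeval_X, aeval_X]
    simp only [Sum.elim_inr]
    ring
  have h2 : Φ ((Mmat g i).det) = ((Mmat g i).map Φ).det := by
    have := RingHom.map_det Φ.toRingHom (Mmat g i)
    simpa using this
  have h3 : (Mmat g i).map Φ
      = (Matrix.vandermonde fun a : Fin k => (C ζ + X a : MvPolynomial (Fin k) ℂ)).updateCol i
          (fun a => Polynomial.aeval (C ζ + X a : MvPolynomial (Fin k) ℂ) p) := by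
    funext a b
    rw [Matrix.map_apply, Matrix.updateCol_apply, Mmat]
    by_cases hbi : b = i
    · rw [if_pos hbi, if_pos hbi]
      have hcomp : (Polynomial.aeval (C ζ + X a : MvPolynomial (Fin k) ℂ)).comp (Stmt7.Tv f)
          = aeval ((Sum.elim (fun m => (C (f m) : MvPolynomial (Fin k) ℂ))
              fun a' : Fin k => C ζ + X a') ∘ Sum.map id fun _ : Unit => a) := by
        apply algHom_ext
        intro j
        cases j with
        | inl m => simp [Stmt7.Tv]
        | inr u => cases u; simp [Stmt7.Tv]
      rw [hΦ, aeval_rename, hp, ← AlgHom.comp_apply, hcomp]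
    · rw [if_neg hbi, if_neg hbi, map_pow, hΦ, aeval_X]
      simp only [Sum.elim_inr]
      rfl
  have h5 : C (constantCoeff (Φ V)) * Stmt7.VtA k = C bigsum * Stmt7.VtA k := by
    rw [← Stmt7.hc_mul_vt (Φ V), ← h1, h2, h3, Stmt7.core, hbigsum]
  have h6 : constantCoeff (Φ V) = bigsum :=
    MvPolynomial.C_injective _ _ (mul_right_cancel₀ Stmt7.vtA_ne_zero h5)
  have hA : eval v (rename (Sum.map id fun _ : Fin k => ()) V) = constantCoeff (Φ V) := by
    rw [eval_rename]
    have hhom : (constantCoeff.comp Φ.toRingHom :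
          MvPolynomial (Fin (n-1) ⊕ Fin k) ℂ →+* ℂ)
        = (eval (v ∘ Sum.map id fun _ : Fin k => ()) :
            MvPolynomial (Fin (n-1) ⊕ Fin k) ℂ →+* ℂ) := by
      apply ringHom_ext
      · intro c
        simp [hΦ]
      · intro j
        cases j with
        | inl m => simp [hΦ, hf]
        | inr a => simp [hΦ, hζ]
    exact (RingHom.congr_fun hhom V).symm
  have hB : eval v (∑ s ∈ Finset.Icc (i : ℕ) (k - 1),
        C ((-1 : ℂ) ^ (s - (i : ℕ)) * (s.choose (i : ℕ)) * ((Nat.factorial s : ℂ))⁻¹) *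
          (X (Sum.inr ()) : MvPolynomial (Fin (n - 1) ⊕ Unit) ℂ) ^ (s - (i : ℕ)) *
          (⇑(pderiv (Sum.inr () : Fin (n - 1) ⊕ Unit)))^[s] g) = bigsum := by
    rw [map_sum, hbigsum]
    refine Finset.sum_congr rfl fun s hs => ?_
    rw [eval_mul, eval_mul, eval_C, eval_pow, eval_X]
    have hder : eval v ((⇑(pderiv (Sum.inr () : Fin (n - 1) ⊕ Unit)))^[s] g)
        = Polynomial.eval ζ ((⇑Polynomial.derivative)^[s] p) := by
      rw [Stmt7.Tv_eval v, Stmt7.Tv_pderiv_iterate]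
    rw [hder]
  rw [hA, h6, ← hB]
end

section
/- Let g ∈ ℂ[x_1,…,x_{n−1},z] be weighted homogeneous of degree d with respect to positive integer weights (w_1,…,w_{n−1},w_n), let k ≥ 1 and 0 ≤ i ≤ k−1, and suppose V_i^k(g) ≠ 0. Then i·w_n ≤ d, and V_i^k(g) is weighted homogeneous of degree d − i·w_n in ℂ[x_1,…,x_{n−1},z_1,…,z_k] with respect to the weights assigning w_m to x_m (1 ≤ m ≤ n−1) and w_n to each variable z_a (1 ≤ a ≤ k). -/
/-!
Column `b ≠ i` of `Mmat g i` is weighted homogeneous of degree `b·wn` and column `i` of degree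
`d`, so every term of the Leibniz expansion, hence the determinant, is weighted homogeneous of
degree `d + ∑_{b ≠ i} b·wn`; likewise the Vandermonde determinant has degree `∑_b b·wn`.
In a polynomial ring over a domain, a nonzero factor `P` of a weighted homogeneous `P * Q` with
`Q ≠ 0` weighted homogeneous is itself weighted homogeneous, since each nonzero component of `P`
times `Q` is a component of `P * Q`. Comparing degrees gives `deg V + i·wn = d`.
-/

open MvPolynomial

namespace MvPolynomial

section

variable {R σ M : Type*}

theorem IsWeightedHomogeneous.rename [CommSemiring R] [AddCommMonoid M] {τ : Type*}
    {w : τ → M} {f : σ → τ} {φ : MvPolynomial σ R} {m : M}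
    (hφ : φ.IsWeightedHomogeneous (w ∘ f) m) : (rename f φ).IsWeightedHomogeneous w m := by
  intro u hu
  obtain ⟨v, rfl, hv⟩ := coeff_rename_ne_zero f φ u hu
  rw [← hφ hv, Finsupp.weight_apply, Finsupp.weight_apply,
    Finsupp.sum_mapDomain_index (by simp) (fun _ _ _ => add_smul _ _ _)]
  rfl

theorem weightedHomogeneousComponent_mul_of_isWeightedHomogeneous_right [CommSemiring R]
    [AddCancelCommMonoid M] {w : σ → M} {Q : MvPolynomial σ R} {E : M}
    (hQ : Q.IsWeightedHomogeneous w E) (P : MvPolynomial σ R) (m : M) :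
    weightedHomogeneousComponent w (m + E) (P * Q) = weightedHomogeneousComponent w m P * Q := by
  classical
  induction P using MvPolynomial.induction_on' with
  | monomial d a =>
    have hdQ := (isWeightedHomogeneous_monomial w d a rfl).mul hQ
    rw [weightedHomogeneousComponent_of_mem hdQ,
      weightedHomogeneousComponent_of_mem (isWeightedHomogeneous_monomial w d a rfl),
      add_left_inj]
    split_ifs <;> simp
  | add P₁ P₂ h₁ h₂ => rw [add_mul, map_add, h₁, h₂, map_add, add_mul]

theorem exists_isWeightedHomogeneous_of_mul_right [CommRing R] [IsDomain R]
    [AddCancelCommMonoid M] {w : σ → M} {P Q : MvPolynomial σ R} {E D : M}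
    (hQ : Q.IsWeightedHomogeneous w E) (hQ0 : Q ≠ 0) (hP0 : P ≠ 0)
    (hPQ : (P * Q).IsWeightedHomogeneous w D) :
    ∃ e, e + E = D ∧ P.IsWeightedHomogeneous w e := by
  classical
  have hweight : ∀ u, coeff u P ≠ 0 → Finsupp.weight w u + E = D := by
    intro u hu
    by_contra hne
    have hcomp : weightedHomogeneousComponent w (Finsupp.weight w u) P ≠ 0 := by
      intro h0
      apply hu
      simpa [h0] using (coeff_weightedHomogeneousComponent (w := w) (Finsupp.weight w u) P u).symm
    apply mul_ne_zero hcomp hQ0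
    rw [← weightedHomogeneousComponent_mul_of_isWeightedHomogeneous_right hQ]
    exact hPQ.weightedHomogeneousComponent_ne _ hne
  obtain ⟨u, hu⟩ := exists_coeff_ne_zero hP0
  exact ⟨_, hweight u hu, fun v hv => add_right_cancel ((hweight v hv).trans (hweight u hu).symm)⟩

theorem isWeightedHomogeneous_det [CommRing R] [AddCommMonoid M] {ι : Type*} [Fintype ι]
    [DecidableEq ι] {w : σ → M} {A : Matrix ι ι (MvPolynomial σ R)} {c : ι → M}
    (hA : ∀ a b, (A a b).IsWeightedHomogeneous w (c b)) :
    A.det.IsWeightedHomogeneous w (∑ b, c b) := by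
  rw [← mem_weightedHomogeneousSubmodule, Matrix.det_apply]
  refine Submodule.sum_mem _ fun π _ => ?_
  rw [Units.smul_def]
  refine zsmul_mem ?_ _
  exact IsWeightedHomogeneous.prod _ _ _ fun b _ => hA (π b) b

end

end MvPolynomial

section

variable {n k : ℕ}

theorem isWeightedHomogeneous_X_inr_pow (w : Fin (n - 1) → ℕ) (wn : ℕ) (a : Fin k) (b : ℕ) :
    ((X (Sum.inr a) : MvPolynomial (Fin (n - 1) ⊕ Fin k) ℂ) ^ b).IsWeightedHomogeneous
      (Sum.elim w fun _ => wn) (b * wn) := by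
  simpa using ((isWeightedHomogeneous_X ℂ (Sum.elim w fun _ : Fin k => wn) (Sum.inr a)).pow b)

theorem Vdm_eq_det_vandermonde :
    Vdm n k = (Matrix.vandermonde fun a : Fin k => X (Sum.inr a)).det := by
  rw [Matrix.det_vandermonde, Vdm]
  exact Finset.prod_finset_product _ _ _ (by simp)

theorem Vdm_ne_zero : Vdm n k ≠ 0 := by
  rw [Vdm_eq_det_vandermonde, Matrix.det_vandermonde_ne_zero_iff]
  exact X_injective.comp Sum.inr_injective

theorem isWeightedHomogeneous_Vdm (w : Fin (n - 1) → ℕ) (wn : ℕ) :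
    (Vdm n k).IsWeightedHomogeneous (Sum.elim w fun _ => wn) (∑ b : Fin k, (b : ℕ) * wn) := by
  rw [Vdm_eq_det_vandermonde]
  exact isWeightedHomogeneous_det fun a b => isWeightedHomogeneous_X_inr_pow w wn a b

theorem isWeightedHomogeneous_det_Mmat {g : MvPolynomial (Fin (n - 1) ⊕ Unit) ℂ} {d : ℕ}
    {w : Fin (n - 1) → ℕ} {wn : ℕ} (hg : g.IsWeightedHomogeneous (Sum.elim w fun _ => wn) d)
    (i : Fin k) :
    (Mmat g i).det.IsWeightedHomogeneous (Sum.elim w fun _ => wn)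
      (∑ b, Function.update (fun b : Fin k => (b : ℕ) * wn) i d b) := by
  refine isWeightedHomogeneous_det fun a b => ?_
  by_cases hb : b = i
  · subst hb
    simp only [Mmat, if_pos, Function.update_self]
    have hweights : (Sum.elim w fun _ => wn) ∘ Sum.map id (fun _ : Unit => a) =
        Sum.elim w fun _ => wn := by
      ext (_ | _) <;> rfl
    exact IsWeightedHomogeneous.rename (hweights ▸ hg)
  · simp only [Mmat, if_neg hb, Function.update_of_ne hb]
    exact isWeightedHomogeneous_X_inr_pow w wn a b

end

theorem stmt8_general (n k : ℕ) (i : Fin k)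
    (g : MvPolynomial (Fin (n - 1) ⊕ Unit) ℂ)
    (d : ℕ) (w : Fin (n - 1) → ℕ) (wn : ℕ)
    (hg : g.IsWeightedHomogeneous (Sum.elim w fun _ => wn) d)
    (V : MvPolynomial (Fin (n - 1) ⊕ Fin k) ℂ)
    (hV : (Mmat g i).det = V * Vdm n k) (hV0 : V ≠ 0) :
    (i : ℕ) * wn ≤ d ∧
      V.IsWeightedHomogeneous (Sum.elim w fun _ : Fin k => wn) (d - (i : ℕ) * wn) := by
  have hdet := isWeightedHomogeneous_det_Mmat hg i
  rw [hV, Finset.sum_update_of_mem (Finset.mem_univ i)] at hdet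
  have hVdm := isWeightedHomogeneous_Vdm (k := k) w wn
  rw [Finset.sum_eq_add_sum_sdiff_singleton_of_mem (Finset.mem_univ i)] at hVdm
  obtain ⟨e, he, hVe⟩ := exists_isWeightedHomogeneous_of_mul_right hVdm Vdm_ne_zero hV0 hdet
  have hd : e + (i : ℕ) * wn = d := by omega
  exact ⟨by omega, by rwa [← hd, Nat.add_sub_cancel]⟩

/-- if `g` is weighted homogeneous of degree `d` and `Vᵢᵏ(g) ≠ 0`,
then `i·w_n ≤ d` and `Vᵢᵏ(g)` is weighted homogeneous of degree `d − i·w_n`. -/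
theorem stmt8 (n k : ℕ) (hk : 1 ≤ k) (i : Fin k)
    (g : MvPolynomial (Fin (n - 1) ⊕ Unit) ℂ)
    (d : ℕ) (w : Fin (n - 1) → ℕ) (wn : ℕ)
    (hw : ∀ m, 0 < w m) (hwn : 0 < wn)
    (hg : g.IsWeightedHomogeneous (Sum.elim w fun _ => wn) d)
    (V : MvPolynomial (Fin (n - 1) ⊕ Fin k) ℂ)
    (hV : (Mmat g i).det = V * Vdm n k) (hV0 : V ≠ 0) :
    (i : ℕ) * wn ≤ d ∧
      V.IsWeightedHomogeneous (Sum.elim w fun _ : Fin k => wn) (d - (i : ℕ) * wn) :=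
  stmt8_general n k i g d w wn hg V hV hV0
end
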